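/- arXiv:1811.11633 — 4 statements merged into one kernel-verified Lean document; each statement's English description precedes it below -/
import Mathlib

section
/- For matrices L ∈ ℂ^{n×k} and R ∈ ℂ^{m×k}, the nuclear norm of LRᵀ satisfies ‖LRᵀ‖_* ≤ (1/2)(‖L‖_F² + ‖R‖_F²). -/
/-!
Let `v i` be an orthonormal eigenbasis of `Mᴴ * M` for `M = L * Rᵀ`. The vectors `M v i` are
pairwise orthogonal with `‖M v i‖ = √(eigenvalue i)`, so normalizing the nonzero ones gives an
orthonormal family `u i` with `‖M v i‖ = ⟪u i, M v i⟫ = ⟪Lᴴ u i, Rᵀ v i⟫`. Cauchy–Schwarz and AM–GM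
bound this by `(‖Lᴴ u i‖² + ‖Rᵀ v i‖²) / 2`, and Bessel's inequality bounds `∑ ‖Lᴴ u i‖²` and
`∑ ‖Rᵀ v i‖²` by the squared Frobenius norms of `L` and `R`.
-/

open Matrix

/-- Nuclear norm: sum of singular values (square roots of eigenvalues of MᴴM). -/
noncomputable def nuclearNorm {m k : ℕ} (M : Matrix (Fin m) (Fin k) ℂ) : ℝ :=
  ∑ i, Real.sqrt ((Matrix.isHermitian_conjTranspose_mul_self M).eigenvalues i)

open WithLp
open scoped InnerProductSpace

section InnerProductSpace

variable {𝕜 E ι : Type*} [RCLike 𝕜] [NormedAddCommGroup E] [InnerProductSpace 𝕜 E]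

theorem inner_inv_norm_smul_self (x : E) : ⟪(‖x‖⁻¹ : 𝕜) • x, x⟫_𝕜 = ‖x‖ := by
  rcases eq_or_ne x 0 with rfl | hx
  · simp
  · have : (‖x‖ : 𝕜) ≠ 0 := by exact_mod_cast norm_ne_zero_iff.mpr hx
    rw [inner_smul_left, inner_self_eq_norm_sq_to_K, map_inv₀, RCLike.conj_ofReal]
    field_simp

theorem orthonormal_inv_norm_smul_of_pairwise_inner_eq_zero {w : ι → E}
    (hw : Pairwise fun i j => ⟪w i, w j⟫_𝕜 = 0) :
    Orthonormal 𝕜 fun i : {i // w i ≠ 0} => (‖w i‖⁻¹ : 𝕜) • w i := by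
  refine ⟨fun i => ?_, fun i j hij => ?_⟩
  · rw [norm_smul, norm_inv, RCLike.norm_ofReal, abs_norm]
    exact inv_mul_cancel₀ (norm_ne_zero_iff.mpr i.2)
  · dsimp only
    rw [inner_smul_left, inner_smul_right, hw (Subtype.coe_ne_coe.mpr hij), mul_zero, mul_zero]

end InnerProductSpace

namespace Matrix

variable {𝕜 : Type*} [RCLike 𝕜] {m n k ι : Type*} [Fintype m] [Fintype n] [Fintype k]
  [Fintype ι]

theorem inner_toLp_mulVec (A : Matrix m n 𝕜) (x : m → 𝕜) (y : n → 𝕜) :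
    ⟪toLp 2 x, toLp 2 (A *ᵥ y)⟫_𝕜 = ⟪toLp 2 (Aᴴ *ᵥ x), toLp 2 y⟫_𝕜 := by
  simp only [EuclideanSpace.inner_toLp_toLp, star_mulVec, conjTranspose_conjTranspose]
  rw [dotProduct_comm, dotProduct_mulVec, dotProduct_comm]

theorem norm_toLp_mulVec_le_of_inner_eq (A : Matrix m n 𝕜) (y : n → 𝕜) (u : EuclideanSpace 𝕜 m)
    (hu : ⟪u, toLp 2 (A *ᵥ y)⟫_𝕜 = ‖toLp 2 (A *ᵥ y)‖) :
    ‖toLp 2 (A *ᵥ y)‖ ≤ 1 / 2 * (‖toLp 2 (Aᴴ *ᵥ ⇑u)‖ ^ 2 + ‖toLp 2 y‖ ^ 2) := by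
  have hcs : ‖toLp 2 (A *ᵥ y)‖ ≤ ‖toLp 2 (Aᴴ *ᵥ ⇑u)‖ * ‖toLp 2 y‖ := by
    have := norm_inner_le_norm (𝕜 := 𝕜) (toLp 2 (Aᴴ *ᵥ ⇑u)) (toLp 2 y)
    rwa [← inner_toLp_mulVec, toLp_ofLp, hu, RCLike.norm_ofReal, abs_norm] at this
  nlinarith [sq_nonneg (‖toLp 2 (Aᴴ *ᵥ ⇑u)‖ - ‖toLp 2 y‖)]

theorem sum_norm_sq_toLp_mulVec_le (A : Matrix m n 𝕜) {u : ι → EuclideanSpace 𝕜 n}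
    (hu : Orthonormal 𝕜 u) :
    ∑ i, ‖toLp 2 (A *ᵥ ⇑(u i))‖ ^ 2 ≤ ∑ r, ∑ c, ‖A r c‖ ^ 2 := by
  have hrow : ∀ i r, (A *ᵥ ⇑(u i)) r = ⟪toLp 2 (star (A r)), u i⟫_𝕜 := fun i r => by
    rw [EuclideanSpace.inner_eq_star_dotProduct, star_star, dotProduct_comm]
    rfl
  calc ∑ i, ‖toLp 2 (A *ᵥ ⇑(u i))‖ ^ 2
      = ∑ r, ∑ i, ‖⟪u i, toLp 2 (star (A r))⟫_𝕜‖ ^ 2 := by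
        simp only [EuclideanSpace.norm_sq_eq, hrow, norm_inner_symm (u _)]
        exact Finset.sum_comm
    _ ≤ ∑ r, ‖toLp 2 (star (A r))‖ ^ 2 :=
        Finset.sum_le_sum fun r _ => hu.sum_inner_products_le _
    _ = ∑ r, ∑ c, ‖A r c‖ ^ 2 := by
        simp [EuclideanSpace.norm_sq_eq]

theorem sum_sum_norm_sq_conjTranspose (A : Matrix m n 𝕜) :
    ∑ i, ∑ j, ‖Aᴴ i j‖ ^ 2 = ∑ i, ∑ j, ‖A i j‖ ^ 2 := by
  simpa using Finset.sum_comm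

theorem sum_sum_norm_sq_transpose (A : Matrix m n 𝕜) :
    ∑ i, ∑ j, ‖Aᵀ i j‖ ^ 2 = ∑ i, ∑ j, ‖A i j‖ ^ 2 :=
  Finset.sum_comm

theorem sum_norm_toLp_mul_mulVec_le (L : Matrix m k 𝕜) (R : Matrix k n 𝕜)
    {v : ι → EuclideanSpace 𝕜 n} (hv : Orthonormal 𝕜 v)
    (horth : Pairwise fun i j => ⟪toLp 2 ((L * R) *ᵥ ⇑(v i)), toLp 2 ((L * R) *ᵥ ⇑(v j))⟫_𝕜 = 0) :
    ∑ i, ‖toLp 2 ((L * R) *ᵥ ⇑(v i))‖ ≤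
      1 / 2 * (∑ i, ∑ j, ‖L i j‖ ^ 2 + ∑ i, ∑ j, ‖R i j‖ ^ 2) := by
  set w : ι → EuclideanSpace 𝕜 m := fun i => toLp 2 ((L * R) *ᵥ ⇑(v i))
  let u : {i // w i ≠ 0} → EuclideanSpace 𝕜 m := fun i => (‖w i‖⁻¹ : 𝕜) • w i
  have hu : Orthonormal 𝕜 u := orthonormal_inv_norm_smul_of_pairwise_inner_eq_zero horth
  have hw : ∀ i, w i = toLp 2 (L *ᵥ R *ᵥ ⇑(v i)) := fun i => by rw [mulVec_mulVec]
  calc ∑ i, ‖w i‖ = ∑ i : {i // w i ≠ 0}, ‖w i‖ := by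
        rw [← Fintype.sum_subtype_add_sum_subtype (fun i => w i ≠ 0), add_eq_left]
        exact Finset.sum_eq_zero fun i _ => norm_eq_zero.mpr (not_not.mp i.2)
    _ ≤ ∑ i : {i // w i ≠ 0},
          1 / 2 * (‖toLp 2 (Lᴴ *ᵥ ⇑(u i))‖ ^ 2 + ‖toLp 2 (R *ᵥ ⇑(v i))‖ ^ 2) :=
        Finset.sum_le_sum fun i _ => by
          rw [hw]
          refine norm_toLp_mulVec_le_of_inner_eq L _ _ ?_
          rw [← hw]
          exact inner_inv_norm_smul_self _
    _ = 1 / 2 * (∑ i : {i // w i ≠ 0}, ‖toLp 2 (Lᴴ *ᵥ ⇑(u i))‖ ^ 2 +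
          ∑ i : {i // w i ≠ 0}, ‖toLp 2 (R *ᵥ ⇑(v i))‖ ^ 2) := by
        rw [← Finset.mul_sum, Finset.sum_add_distrib]
    _ ≤ 1 / 2 * (∑ i, ∑ j, ‖L i j‖ ^ 2 + ∑ i, ∑ j, ‖R i j‖ ^ 2) := by
        rw [← sum_sum_norm_sq_conjTranspose L]
        gcongr
        · exact sum_norm_sq_toLp_mulVec_le _ hu
        · exact sum_norm_sq_toLp_mulVec_le R (hv.comp _ Subtype.val_injective)

variable [DecidableEq n] (M : Matrix m n 𝕜)

theorem inner_toLp_mulVec_eigenvectorBasis (i j : n) :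
    ⟪toLp 2 (M *ᵥ ⇑((isHermitian_conjTranspose_mul_self M).eigenvectorBasis i)),
      toLp 2 (M *ᵥ ⇑((isHermitian_conjTranspose_mul_self M).eigenvectorBasis j))⟫_𝕜 =
      if i = j then ((isHermitian_conjTranspose_mul_self M).eigenvalues i : 𝕜) else 0 := by
  set hM := isHermitian_conjTranspose_mul_self M
  rw [inner_toLp_mulVec, mulVec_mulVec, hM.mulVec_eigenvectorBasis, toLp_smul, toLp_ofLp,
    toLp_ofLp, RCLike.real_smul_eq_coe_smul (K := 𝕜), inner_smul_left, RCLike.conj_ofReal,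
    orthonormal_iff_ite.mp hM.eigenvectorBasis.orthonormal]
  simp

theorem norm_toLp_mulVec_eigenvectorBasis (i : n) :
    ‖toLp 2 (M *ᵥ ⇑((isHermitian_conjTranspose_mul_self M).eigenvectorBasis i))‖ =
      √((isHermitian_conjTranspose_mul_self M).eigenvalues i) := by
  rw [eq_comm,
    Real.sqrt_eq_iff_eq_sq (eigenvalues_conjTranspose_mul_self_nonneg M i) (norm_nonneg _),
    ← RCLike.ofReal_inj (K := 𝕜), RCLike.ofReal_pow, ← inner_self_eq_norm_sq_to_K,
    inner_toLp_mulVec_eigenvectorBasis, if_pos rfl]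

end Matrix

theorem nuclearNorm_eq_sum_norm_toLp_mulVec_eigenvectorBasis {m k : ℕ}
    (M : Matrix (Fin m) (Fin k) ℂ) :
    nuclearNorm M =
      ∑ i, ‖toLp 2 (M *ᵥ ⇑((isHermitian_conjTranspose_mul_self M).eigenvectorBasis i))‖ := by
  simp only [nuclearNorm, norm_toLp_mulVec_eigenvectorBasis]

/-- ‖LRᵀ‖_* ≤ (1/2)(‖L‖_F² + ‖R‖_F²). -/
theorem nuclear_norm_factor_bound (n m k : ℕ)
    (L : Matrix (Fin n) (Fin k) ℂ) (R : Matrix (Fin m) (Fin k) ℂ) :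
    nuclearNorm (L * Rᵀ) ≤
      (1 / 2) * ((∑ i, ∑ j, ‖L i j‖ ^ 2) + ∑ i, ∑ j, ‖R i j‖ ^ 2) := by
  rw [nuclearNorm_eq_sum_norm_toLp_mulVec_eigenvectorBasis, ← sum_sum_norm_sq_transpose R]
  exact sum_norm_toLp_mul_mulVec_le L Rᵀ
    (isHermitian_conjTranspose_mul_self _).eigenvectorBasis.orthonormal
    fun i j hij => (inner_toLp_mulVec_eigenvectorBasis _ i j).trans (if_neg hij)
end

section
/- For the partial-minimization value function Q̃(w) = min_x [ (1/(2η₁))‖Cx − w₁‖² + (1/(2η₂))‖w₂ − Ax + b‖² ] with w = (w₁, w₂), if the joint objective has a minimizer in x for every w, then Q̃ is differentiable with gradient Lipschitz constant at most max(1/η₁, 1/η₂). -/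
/-!
`Q̃` is convex, being the partial minimum of the jointly convex function `Q`. For each `u`, the
quadratic `v ↦ Q(x(u), v)` majorizes `Q̃` and touches it at `u`, so `Q̃` has a quadratic upper
bound with curvature `L = max(1/η₁, 1/η₂)` at every point. For a convex function, convexity turns
these upper bounds into matching lower bounds, which gives differentiability; combining the upper
bound with the gradient inequality of convexity gives cocoercivity of the gradient, hence its
`L`-Lipschitz continuity.
-/

open Set RealInnerProductSpace Asymptotics

section QuadraticUpperBound

variable {F : Type*} [NormedAddCommGroup F] [InnerProductSpace ℝ F] {f : F → ℝ} {g : F → F}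
  {L : ℝ}

def HasQuadraticUpperBound (f : F → ℝ) (g : F → F) (L : ℝ) : Prop :=
  ∀ u v, f v ≤ f u + ⟪g u, v - u⟫ + L / 2 * ‖v - u‖ ^ 2

theorem HasQuadraticUpperBound.add_inner_sub_le (hup : HasQuadraticUpperBound f g L)
    (hf : ConvexOn ℝ univ f) (u h : F) : f u + ⟪g u, h⟫ - L / 2 * ‖h‖ ^ 2 ≤ f (u + h) := by
  have hmid : f u ≤ 2⁻¹ * f (u - h) + 2⁻¹ * f (u + h) := by
    have := hf.2 (mem_univ (u - h)) (mem_univ (u + h)) (by norm_num : (0 : ℝ) ≤ 2⁻¹)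
      (by norm_num : (0 : ℝ) ≤ 2⁻¹) (by norm_num)
    rwa [← smul_add, sub_add_add_cancel, ← two_smul ℝ u, smul_smul, inv_mul_cancel₀ two_ne_zero,
      one_smul, smul_eq_mul, smul_eq_mul] at this
  have hback := hup u (u - h)
  rw [sub_sub_cancel_left, inner_neg_right, norm_neg] at hback
  linarith

theorem hasGradientAt_of_abs_sub_inner_le [CompleteSpace F] {u g' : F} {K : ℝ}
    (hbound : ∀ h, |f (u + h) - f u - ⟪g', h⟫| ≤ K * ‖h‖ ^ 2) : HasGradientAt f g' u := by
  rw [hasGradientAt_iff_isLittleO_nhds_zero]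
  refine IsBigO.trans_isLittleO (IsBigO.of_bound K (Filter.Eventually.of_forall fun h => ?_))
    (isLittleO_norm_pow_id one_lt_two)
  simpa using hbound h

theorem HasQuadraticUpperBound.hasGradientAt [CompleteSpace F] (hup : HasQuadraticUpperBound f g L)
    (hf : ConvexOn ℝ univ f) (u : F) : HasGradientAt f (g u) u := by
  refine hasGradientAt_of_abs_sub_inner_le (K := L / 2) fun h => abs_le.2 ⟨?_, ?_⟩
  · linarith [hup.add_inner_sub_le hf u h]
  · linarith [add_sub_cancel_left u h ▸ hup u (u + h)]

theorem ConvexOn.add_inner_le_of_hasGradientAt [CompleteSpace F] (hf : ConvexOn ℝ univ f)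
    {u v g' : F} (hg : HasGradientAt f g' u) : f u + ⟪g', v - u⟫ ≤ f v := by
  have hline : ConvexOn ℝ univ (f ∘ AffineMap.lineMap (k := ℝ) u v) := hf.comp_affineMap _
  have hderiv : HasDerivAt (f ∘ AffineMap.lineMap (k := ℝ) u v) ⟪g', v - u⟫ 0 := by
    have := (AffineMap.lineMap_apply_zero (k := ℝ) u v).symm ▸ hg.hasFDerivAt
    simpa using this.comp_hasDerivAt (0 : ℝ) AffineMap.hasDerivAt_lineMap
  have := hline.le_slope_of_hasDerivAt (mem_univ 0) (mem_univ 1) one_pos hderiv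
  simp only [slope, sub_zero, inv_one, Function.comp_apply, AffineMap.lineMap_apply_one,
    AffineMap.lineMap_apply_zero, vsub_eq_sub, smul_eq_mul, one_mul] at this
  linarith

/-- Cocoercivity. The proof compares the subgradient inequality at `u` with the upper bound at `v`,
both evaluated at the gradient step `v - L⁻¹ • (g v - g u)`. -/
theorem HasQuadraticUpperBound.add_inner_add_sq_le [CompleteSpace F]
    (hup : HasQuadraticUpperBound f g L) (hf : ConvexOn ℝ univ f) (hL : 0 < L) (u v : F) :
    f u + ⟪g u, v - u⟫ + (2 * L)⁻¹ * ‖g v - g u‖ ^ 2 ≤ f v := by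
  set z := v - L⁻¹ • (g v - g u)
  have hsub := hf.add_inner_le_of_hasGradientAt (v := z) (hup.hasGradientAt hf u)
  have hdesc := hup v z
  have hzu : z - u = (v - u) - L⁻¹ • (g v - g u) := by simp only [z]; abel
  have hzv : z - v = -(L⁻¹ • (g v - g u)) := by simp only [z]; abel
  rw [hzu, inner_sub_right, real_inner_smul_right] at hsub
  rw [hzv, inner_neg_right, real_inner_smul_right, norm_neg, norm_smul, mul_pow,
    Real.norm_of_nonneg (inv_nonneg.2 hL.le)] at hdesc
  have hsq : L⁻¹ * ⟪g v, g v - g u⟫ - L⁻¹ * ⟪g u, g v - g u⟫ = L⁻¹ * ‖g v - g u‖ ^ 2 := by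
    rw [← mul_sub, ← inner_sub_left, real_inner_self_eq_norm_sq]
  have hcoef : L / 2 * (L⁻¹ ^ 2 * ‖g v - g u‖ ^ 2) = (2 * L)⁻¹ * ‖g v - g u‖ ^ 2 := by
    field_simp
  have hcoef' :
      L⁻¹ * ‖g v - g u‖ ^ 2 - (2 * L)⁻¹ * ‖g v - g u‖ ^ 2 = (2 * L)⁻¹ * ‖g v - g u‖ ^ 2 := by
    field_simp; ring
  linarith

theorem HasQuadraticUpperBound.lipschitzWith [CompleteSpace F]
    (hup : HasQuadraticUpperBound f g L) (hf : ConvexOn ℝ univ f) (hL : 0 < L) :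
    LipschitzWith (Real.toNNReal L) g := by
  refine LipschitzWith.of_dist_le_mul fun v u => ?_
  rw [Real.coe_toNNReal _ hL.le, dist_eq_norm, dist_eq_norm]
  have hmono : L⁻¹ * ‖g v - g u‖ ^ 2 ≤ ⟪g v - g u, v - u⟫ := by
    have huv := hup.add_inner_add_sq_le hf hL u v
    have hvu := hup.add_inner_add_sq_le hf hL v u
    rw [← neg_sub v u, inner_neg_right, ← neg_sub (g v) (g u), norm_neg] at hvu
    rw [inner_sub_left]
    have htwo : L⁻¹ * ‖g v - g u‖ ^ 2 = 2 * ((2 * L)⁻¹ * ‖g v - g u‖ ^ 2) := by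
      field_simp
    linarith
  have hsq : ‖g v - g u‖ ^ 2 ≤ L * ‖v - u‖ * ‖g v - g u‖ := by
    have := mul_le_mul_of_nonneg_left (hmono.trans (real_inner_le_norm _ _)) hL.le
    rwa [← mul_assoc, mul_inv_cancel₀ hL.ne', one_mul, mul_comm ‖g v - g u‖, ← mul_assoc] at this
  nlinarith [norm_nonneg (g v - g u), mul_nonneg hL.le (norm_nonneg (v - u))]

theorem HasQuadraticUpperBound.differentiable_and_lipschitzWith_gradient [CompleteSpace F]
    (hup : HasQuadraticUpperBound f g L) (hf : ConvexOn ℝ univ f) (hL : 0 < L) :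
    Differentiable ℝ f ∧ LipschitzWith (Real.toNNReal L) (gradient f) := by
  have hgrad := hup.hasGradientAt hf
  rw [show gradient f = g from funext fun u => (hgrad u).gradient]
  exact ⟨fun u => (hgrad u).differentiableAt, hup.lipschitzWith hf hL⟩

end QuadraticUpperBound

theorem ConvexOn.comp_argmin {X W : Type*} [AddCommGroup X] [Module ℝ X] [AddCommGroup W]
    [Module ℝ W] {q : X → W → ℝ} (hq : ConvexOn ℝ univ (Function.uncurry q))
    {m : W → X} (hm : ∀ w x, q (m w) w ≤ q x w) : ConvexOn ℝ univ fun w => q (m w) w := by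
  refine ⟨convex_univ, fun w _ w' _ a b ha hb hab => ?_⟩
  calc q (m (a • w + b • w')) (a • w + b • w')
      ≤ q (a • m w + b • m w') (a • w + b • w') := hm _ _
    _ = Function.uncurry q (a • (m w, w) + b • (m w', w')) := rfl
    _ ≤ a • q (m w) w + b • q (m w') w' := hq.2 (mem_univ _) (mem_univ _) ha hb hab

theorem ConvexOn.comp_sub_affineMap {X W : Type*} [AddCommGroup X] [Module ℝ X] [AddCommGroup W]
    [Module ℝ W] {φ : W → ℝ} (hφ : ConvexOn ℝ univ φ) (T : X →ᵃ[ℝ] W) :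
    ConvexOn ℝ univ fun p : X × W => φ (p.2 - T p.1) := by
  have := hφ.comp_affineMap (AffineMap.snd - T.comp AffineMap.fst)
  simp only [AffineMap.coe_sub, AffineMap.coe_comp, AffineMap.coe_snd, AffineMap.coe_fst] at this
  exact this

section WeightedNormSq

variable {E₁ E₂ : Type*} [NormedAddCommGroup E₁] [NormedAddCommGroup E₂] (α β : ℝ)

def weightedNormSq (y : WithLp 2 (E₁ × E₂)) : ℝ := α * ‖y.fst‖ ^ 2 + β * ‖y.snd‖ ^ 2

theorem weightedNormSq_le_max_mul (y : WithLp 2 (E₁ × E₂)) :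
    weightedNormSq α β y ≤ max α β * ‖y‖ ^ 2 := by
  rw [WithLp.prod_norm_sq_eq_of_L2, mul_add]
  exact add_le_add (mul_le_mul_of_nonneg_right (le_max_left α β) (by positivity))
    (mul_le_mul_of_nonneg_right (le_max_right α β) (by positivity))

variable [InnerProductSpace ℝ E₁] [InnerProductSpace ℝ E₂]

theorem weightedNormSq_add (y h : WithLp 2 (E₁ × E₂)) :
    weightedNormSq α β (y + h) = weightedNormSq α β y
      + ⟪WithLp.toLp 2 ((2 * α) • y.fst, (2 * β) • y.snd), h⟫ + weightedNormSq α β h := by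
  simp only [weightedNormSq, WithLp.add_fst, WithLp.add_snd, norm_add_sq_real,
    WithLp.prod_inner_apply, real_inner_smul_left, WithLp.ofLp_fst, WithLp.ofLp_snd]
  ring

variable {α β} in
theorem convexOn_weightedNormSq (hα : 0 ≤ α) (hβ : 0 ≤ β) :
    ConvexOn ℝ univ (weightedNormSq (E₁ := E₁) (E₂ := E₂) α β) :=
  (((convexOn_univ_norm.pow (fun _ _ => norm_nonneg _) 2).comp_linearMap
    (WithLp.fstₗ 2 ℝ E₁ E₂)).smul hα).add
    (((convexOn_univ_norm.pow (fun _ _ => norm_nonneg _) 2).comp_linearMap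
    (WithLp.sndₗ 2 ℝ E₁ E₂)).smul hβ)

end WeightedNormSq

/-- The partial-minimization value function Q̃ is differentiable with
gradient Lipschitz constant at most max(1/η₁, 1/η₂). -/
theorem value_function_smooth (n c d : ℕ)
    (C : EuclideanSpace ℝ (Fin n) →L[ℝ] EuclideanSpace ℝ (Fin c))
    (A : EuclideanSpace ℝ (Fin n) →L[ℝ] EuclideanSpace ℝ (Fin d))
    (b : EuclideanSpace ℝ (Fin d)) (η₁ η₂ : ℝ) (h1 : 0 < η₁) (h2 : 0 < η₂)
    (Q : EuclideanSpace ℝ (Fin n) →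
      WithLp 2 (EuclideanSpace ℝ (Fin c) × EuclideanSpace ℝ (Fin d)) → ℝ)
    (hQ : Q = fun x w =>
      (1 / (2 * η₁)) * ‖C x - (WithLp.equiv 2 _ w).1‖ ^ 2 +
        (1 / (2 * η₂)) * ‖(WithLp.equiv 2 _ w).2 - A x + b‖ ^ 2)
    (xw : WithLp 2 (EuclideanSpace ℝ (Fin c) × EuclideanSpace ℝ (Fin d)) →
      EuclideanSpace ℝ (Fin n))
    (hmin : ∀ w, IsLeast (Set.range fun x => Q x w) (Q (xw w) w))
    (Qt : WithLp 2 (EuclideanSpace ℝ (Fin c) × EuclideanSpace ℝ (Fin d)) → ℝ)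
    (hQt : Qt = fun w => Q (xw w) w) :
    Differentiable ℝ Qt ∧
      LipschitzWith (Real.toNNReal (max (1 / η₁) (1 / η₂))) (gradient Qt) := by
  have hL : max (1 / η₁) (1 / η₂) / 2 = max (1 / (2 * η₁)) (1 / (2 * η₂)) := by
    rw [← max_div_div_right two_pos.le]; ring_nf
  have hα : 0 ≤ 1 / (2 * η₁) := by positivity
  have hβ : 0 ≤ 1 / (2 * η₂) := by positivity
  set α := 1 / (2 * η₁)
  set β := 1 / (2 * η₂)
  let T := ((WithLp.prodContinuousLinearEquiv 2 ℝ _ _).symm.toLinearMap ∘ₗ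
    (C.toLinearMap.prod A.toLinearMap)).toAffineMap - AffineMap.const ℝ _ (WithLp.toLp 2 (0, b))
  have hQT : ∀ x w, Q x w = weightedNormSq α β (w - T x) := by
    subst hQ; intro x w
    simp [weightedNormSq, T, norm_sub_rev, sub_add]
  have hjoint : ConvexOn ℝ univ (Function.uncurry Q) := by
    rw [show Function.uncurry Q = fun p => weightedNormSq α β (p.2 - T p.1) from
      funext fun ⟨x, w⟩ => hQT x w]
    exact (convexOn_weightedNormSq hα hβ).comp_sub_affineMap T
  have hup : HasQuadraticUpperBound Qt
      (fun u => WithLp.toLp 2 ((2 * α) • (u - T (xw u)).fst, (2 * β) • (u - T (xw u)).snd))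
      (max (1 / η₁) (1 / η₂)) := by
    intro u v
    have hsplit : v - T (xw u) = (u - T (xw u)) + (v - u) := by abel
    calc Qt v ≤ weightedNormSq α β ((u - T (xw u)) + (v - u)) := by
          rw [← hsplit, ← hQT, hQt]; exact (hmin v).2 ⟨xw u, rfl⟩
      _ ≤ _ := by
          rw [weightedNormSq_add, ← hQT, hL, hQt]
          grw [weightedNormSq_le_max_mul]
  exact hup.differentiable_and_lipschitzWith_gradient (hQt ▸ hjoint.comp_argmin fun w x =>
    (hmin w).2 ⟨x, rfl⟩) (lt_max_of_lt_left (by positivity))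
end

section
/- Gradient formula for a least-squares value function: with x(w) = H⁻¹((1/η₁)Cᵀw₁ + (1/η₂)Aᵀ(w₂ + b)) and Q̃(w) = (1/(2η₁))‖C x(w) − w₁‖² + (1/(2η₂))‖w₂ − A x(w) + b‖², the gradient of Q̃ is ∇_{w₁}Q̃ = (1/η₁)(w₁ − C x(w)) and ∇_{w₂}Q̃ = (1/η₂)(w₂ − (A x(w) − b)). -/
/-!
The value function is `Q̃(w) = Φ(x(w), w)` for the joint quadratic `Φ`, and `H x(w) = …` are
exactly the normal equations `∂ₓΦ(x(w), w) = 0`. So in the chain rule for `w ↦ Φ(x(w), w)` the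
term through `x(w)` drops out (envelope theorem), and `∇Q̃(w) = ∇_w Φ(x(w), w)`, which is read off
from the two residuals `C x - w₁` and `w₂ - A x + b`.
-/

open ContinuousLinearMap

theorem HasFDerivAt.comp_prodMk_of_comp_inl_eq_zero {𝕜 X W Y : Type*} [NontriviallyNormedField 𝕜]
    [NormedAddCommGroup X] [NormedSpace 𝕜 X] [NormedAddCommGroup W] [NormedSpace 𝕜 W]
    [NormedAddCommGroup Y] [NormedSpace 𝕜 Y]
    {Φ : X × W → Y} {Φ' : X × W →L[𝕜] Y} {x : W → X} {w : W}
    (hΦ : HasFDerivAt Φ Φ' (x w, w)) (hx : DifferentiableAt 𝕜 x w)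
    (hstat : Φ' ∘L inl 𝕜 X W = 0) :
    HasFDerivAt (fun v => Φ (x v, v)) (Φ' ∘L inr 𝕜 X W) w := by
  refine (hΦ.comp (f := fun v => (x v, v)) w
    (hx.hasFDerivAt.prodMk (hasFDerivAt_id w))).congr_fderiv (ext fun v => ?_)
  have h0 : Φ' (fderiv 𝕜 x w v, 0) = 0 := congr($hstat (fderiv 𝕜 x w v))
  calc Φ' (fderiv 𝕜 x w v, v) = Φ' (fderiv 𝕜 x w v, 0) + Φ' (0, v) := by
        rw [← map_add, Prod.mk_add_mk, add_zero, zero_add]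
    _ = Φ' (0, v) := by rw [h0, zero_add]

section
variable {E F G : Type*} [NormedAddCommGroup E] [InnerProductSpace ℝ E]
  [NormedAddCommGroup F] [InnerProductSpace ℝ F] [NormedAddCommGroup G] [InnerProductSpace ℝ G]
  (C : E →L[ℝ] F) (A : E →L[ℝ] G) (b : G) (η₁ η₂ : ℝ)

noncomputable def leastSquaresObjective (p : E × WithLp 2 (F × G)) : ℝ :=
  1 / (2 * η₁) * ‖C p.1 - p.2.fst‖ ^ 2 + 1 / (2 * η₂) * ‖p.2.snd - A p.1 + b‖ ^ 2

theorem hasFDerivAt_leastSquaresObjective (p : E × WithLp 2 (F × G)) :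
    HasFDerivAt (leastSquaresObjective C A b η₁ η₂)
      ((1 / η₁) • innerSL ℝ (C p.1 - p.2.fst) ∘L
          (C ∘L fst ℝ E _ - WithLp.fstL 2 ℝ F G ∘L snd ℝ E _) +
        (1 / η₂) • innerSL ℝ (p.2.snd - A p.1 + b) ∘L
          (WithLp.sndL 2 ℝ F G ∘L snd ℝ E _ - A ∘L fst ℝ E _)) p := by
  have h₁ := ((C ∘L fst ℝ E _ - WithLp.fstL 2 ℝ F G ∘L snd ℝ E _).hasFDerivAt (x := p)).norm_sq
  have h₂ := (((WithLp.sndL 2 ℝ F G ∘L snd ℝ E _ - A ∘L fst ℝ E _).hasFDerivAt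
    (x := p)).add_const b).norm_sq
  have half_two (η : ℝ) (L : E × WithLp 2 (F × G) →L[ℝ] ℝ) :
      (1 / (2 * η)) • 2 • L = (1 / η) • L := by
    rw [← Nat.cast_smul_eq_nsmul ℝ, smul_smul]
    congr 1
    ring
  refine ((h₁.const_mul (1 / (2 * η₁))).add (h₂.const_mul (1 / (2 * η₂)))).congr_fderiv ?_
  rw [half_two, half_two]
  rfl

theorem hasGradientAt_leastSquaresObjective_comp [CompleteSpace E] [CompleteSpace F]
    [CompleteSpace G] {x : WithLp 2 (F × G) → E} {w : WithLp 2 (F × G)}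
    (hx : DifferentiableAt ℝ x w)
    (hstat : (1 / η₁) • adjoint C (C (x w) - w.fst) -
      (1 / η₂) • adjoint A (w.snd - A (x w) + b) = 0) :
    HasGradientAt (fun v => leastSquaresObjective C A b η₁ η₂ (x v, v))
      (WithLp.toLp 2 ((1 / η₁) • (w.fst - C (x w)), (1 / η₂) • (w.snd - (A (x w) - b)))) w := by
  rw [hasGradientAt_iff_hasFDerivAt]
  refine ((hasFDerivAt_leastSquaresObjective C A b η₁ η₂ (x w, w)).comp_prodMk_of_comp_inl_eq_zero
    hx (ContinuousLinearMap.ext fun u => ?_)).congr_fderiv (ContinuousLinearMap.ext fun v => ?_)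
  · have := congr(inner ℝ $hstat u)
    rw [inner_sub_left, real_inner_smul_left, real_inner_smul_left, adjoint_inner_left,
      adjoint_inner_left, inner_zero_left] at this
    simp only [comp_apply, add_apply, smul_apply, sub_apply, inl_apply, coe_fst', coe_snd',
      WithLp.fstL_apply, WithLp.sndL_apply, WithLp.zero_fst, WithLp.zero_snd, coe_innerSL_apply,
      smul_eq_mul, zero_apply, sub_zero, zero_sub, inner_neg_right]
    linear_combination this
  · simp only [comp_apply, add_apply, smul_apply, sub_apply, inr_apply, coe_fst', coe_snd',
      WithLp.fstL_apply, WithLp.sndL_apply, map_zero, coe_innerSL_apply, smul_eq_mul, sub_zero,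
      zero_sub, inner_neg_right, InnerProductSpace.toDual_apply_apply, WithLp.prod_inner_apply,
      WithLp.ofLp_fst, WithLp.ofLp_snd, real_inner_smul_left, ← sub_add, ← inner_neg_left, neg_sub]

end

theorem value_function_gradient_general (n c d : ℕ)
    (C : EuclideanSpace ℝ (Fin n) →L[ℝ] EuclideanSpace ℝ (Fin c))
    (A : EuclideanSpace ℝ (Fin n) →L[ℝ] EuclideanSpace ℝ (Fin d))
    (b : EuclideanSpace ℝ (Fin d)) (η₁ η₂ : ℝ)
    (H Hinv : EuclideanSpace ℝ (Fin n) →L[ℝ] EuclideanSpace ℝ (Fin n))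
    (hH : H = (1 / η₁) • (ContinuousLinearMap.adjoint C ∘L C) +
        (1 / η₂) • (ContinuousLinearMap.adjoint A ∘L A))
    (hinv2 : H ∘L Hinv = ContinuousLinearMap.id ℝ _)
    (xw : WithLp 2 (EuclideanSpace ℝ (Fin c) × EuclideanSpace ℝ (Fin d)) →
      EuclideanSpace ℝ (Fin n))
    (hxw : xw = fun w => Hinv ((1 / η₁) • ContinuousLinearMap.adjoint C (WithLp.equiv 2 _ w).1 +
        (1 / η₂) • ContinuousLinearMap.adjoint A ((WithLp.equiv 2 _ w).2 + b)))
    (Qt : WithLp 2 (EuclideanSpace ℝ (Fin c) × EuclideanSpace ℝ (Fin d)) → ℝ)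
    (hQt : Qt = fun w => (1 / (2 * η₁)) * ‖C (xw w) - (WithLp.equiv 2 _ w).1‖ ^ 2 +
        (1 / (2 * η₂)) * ‖(WithLp.equiv 2 _ w).2 - A (xw w) + b‖ ^ 2) :
    ∀ w, HasGradientAt Qt
      ((WithLp.equiv 2 (EuclideanSpace ℝ (Fin c) × EuclideanSpace ℝ (Fin d))).symm
        ((1 / η₁) • ((WithLp.equiv 2 _ w).1 - C (xw w)),
         (1 / η₂) • ((WithLp.equiv 2 _ w).2 - (A (xw w) - b)))) w := by
  intro w
  have hHx : H (xw w) = (1 / η₁) • adjoint C w.fst + (1 / η₂) • adjoint A (w.snd + b) := by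
    rw [hxw]
    exact congr($hinv2 _)
  have hstat : (1 / η₁) • adjoint C (C (xw w) - w.fst) -
      (1 / η₂) • adjoint A (w.snd - A (xw w) + b) = 0 := by
    rw [hH] at hHx
    simp only [add_apply, smul_apply, comp_apply, map_add] at hHx
    simp only [map_sub, map_add]
    linear_combination (norm := module) hHx
  have hdiff : DifferentiableAt ℝ xw w := by
    subst hxw
    change DifferentiableAt ℝ (fun v => Hinv ((1 / η₁) • adjoint C (WithLp.fstL 2 ℝ _ _ v) +
      (1 / η₂) • adjoint A (WithLp.sndL 2 ℝ _ _ v + b))) w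
    fun_prop
  subst hQt
  exact hasGradientAt_leastSquaresObjective_comp C A b η₁ η₂ hdiff hstat

/-- Gradient formula for the least-squares value function. -/
theorem value_function_gradient (n c d : ℕ)
    (C : EuclideanSpace ℝ (Fin n) →L[ℝ] EuclideanSpace ℝ (Fin c))
    (A : EuclideanSpace ℝ (Fin n) →L[ℝ] EuclideanSpace ℝ (Fin d))
    (b : EuclideanSpace ℝ (Fin d)) (η₁ η₂ : ℝ) (h1 : 0 < η₁) (h2 : 0 < η₂)
    (H Hinv : EuclideanSpace ℝ (Fin n) →L[ℝ] EuclideanSpace ℝ (Fin n))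
    (hH : H = (1 / η₁) • (ContinuousLinearMap.adjoint C ∘L C) +
        (1 / η₂) • (ContinuousLinearMap.adjoint A ∘L A))
    (hinv1 : Hinv ∘L H = ContinuousLinearMap.id ℝ _)
    (hinv2 : H ∘L Hinv = ContinuousLinearMap.id ℝ _)
    (xw : WithLp 2 (EuclideanSpace ℝ (Fin c) × EuclideanSpace ℝ (Fin d)) →
      EuclideanSpace ℝ (Fin n))
    (hxw : xw = fun w => Hinv ((1 / η₁) • ContinuousLinearMap.adjoint C (WithLp.equiv 2 _ w).1 +
        (1 / η₂) • ContinuousLinearMap.adjoint A ((WithLp.equiv 2 _ w).2 + b)))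
    (Qt : WithLp 2 (EuclideanSpace ℝ (Fin c) × EuclideanSpace ℝ (Fin d)) → ℝ)
    (hQt : Qt = fun w => (1 / (2 * η₁)) * ‖C (xw w) - (WithLp.equiv 2 _ w).1‖ ^ 2 +
        (1 / (2 * η₂)) * ‖(WithLp.equiv 2 _ w).2 - A (xw w) + b‖ ^ 2) :
    ∀ w, HasGradientAt Qt
      ((WithLp.equiv 2 (EuclideanSpace ℝ (Fin c) × EuclideanSpace ℝ (Fin d))).symm
        ((1 / η₁) • ((WithLp.equiv 2 _ w).1 - C (xw w)),
         (1 / η₂) • ((WithLp.equiv 2 _ w).2 - (A (xw w) - b)))) w :=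
  value_function_gradient_general n c d C A b η₁ η₂ H Hinv hH hinv2 xw hxw Qt hQt
end

section
/- Distance to the ℓ0 ball: for z ∈ ℝⁿ and integer τ with 0 ≤ τ ≤ n, the squared Euclidean distance from z to the set {x : ‖x‖₀ ≤ τ} equals the sum of the squares of the n − τ smallest-magnitude entries of z. -/
/-!
A vector `x` with at most `τ` nonzero entries vanishes on at least `n - τ` coordinates, and on
each of them it pays `z i ^ 2`. Since the squares `z (e j) ^ 2` decrease in `j`, an exchange
argument shows that any `n - τ` of them sum to at least the last `n - τ`. Keeping the `τ`
largest entries of `z` and zeroing the rest (hard thresholding) attains this bound.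
-/

open Finset

theorem Finset.sum_le_sum_of_isUpperSet_of_card_le {ι M : Type*} [LinearOrder ι]
    [AddCommMonoid M] [PartialOrder M] [IsOrderedAddMonoid M] {w : ι → M}
    (hw : Antitone w) (hw₀ : ∀ i, 0 ≤ w i) {A T : Finset ι} (hA : IsUpperSet (A : Set ι))
    (hcard : #A ≤ #T) :
    ∑ a ∈ A, w a ≤ ∑ t ∈ T, w t := by
  classical
  rw [← sum_inter_add_sum_sdiff A T, ← sum_inter_add_sum_sdiff T A, inter_comm]
  gcongr _ + ?_
  rcases (A \ T).eq_empty_or_nonempty with hAT | hAT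
  · rw [hAT, sum_empty]
    exact sum_nonneg fun t _ => hw₀ t
  · set a₀ := (A \ T).min' hAT
    have ha₀ : a₀ ∈ A := (mem_sdiff.1 (min'_mem _ hAT)).1
    calc ∑ a ∈ A \ T, w a ≤ #(A \ T) • w a₀ :=
          sum_le_card_nsmul _ _ _ fun a ha => hw (min'_le _ _ ha)
      _ ≤ #(T \ A) • w a₀ :=
          nsmul_le_nsmul_left (hw₀ _) (card_sdiff_le_card_sdiff_iff.2 hcard)
      _ ≤ ∑ t ∈ T \ A, w t := card_nsmul_le_sum _ _ _ fun t ht =>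
          hw (le_of_not_ge fun h => (mem_sdiff.1 ht).2 (hA h ha₀))

theorem sum_sq_le_sum_sub_sq {ι : Type*} [Fintype ι] {x : ι → ℝ} {s : Finset ι}
    (hx : ∀ i ∈ s, x i = 0) (z : ι → ℝ) :
    ∑ i ∈ s, z i ^ 2 ≤ ∑ i, (x i - z i) ^ 2 :=
  calc ∑ i ∈ s, z i ^ 2 = ∑ i ∈ s, (x i - z i) ^ 2 :=
        sum_congr rfl fun i hi => by rw [hx i hi, zero_sub, neg_sq]
    _ ≤ ∑ i, (x i - z i) ^ 2 :=
        sum_le_sum_of_subset_of_nonneg (subset_univ s) fun i _ _ => sq_nonneg _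

theorem Fin.card_filter_le_val (n τ : ℕ) : #{i : Fin n | τ ≤ (i : ℕ)} = n - τ := by
  have := card_filter_add_card_filter_not (s := (univ : Finset (Fin n))) (fun i => (i : ℕ) < τ)
  simp only [Fin.card_filter_val_lt, not_lt, card_univ, Fintype.card_fin] at this
  omega

theorem card_filter_eq_zero_add_ncard_support {ι M : Type*} [Fintype ι] [Zero M]
    [DecidableEq M] (x : ι → M) :
    #{i | x i = 0} + (Function.support x).ncard = Fintype.card ι := by
  rw [Function.support, Set.ncard_eq_toFinset_card', Set.toFinset_ofPred]
  exact card_filter_add_card_filter_not _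

section HardThreshold

variable {n : ℕ} (τ : ℕ) (e : Equiv.Perm (Fin n)) (z : Fin n → ℝ)

/-- Keeps the `τ` entries of largest magnitude when `e` sorts `z` by decreasing magnitude. -/
def hardThreshold : Fin n → ℝ := fun i => if τ ≤ (e.symm i : ℕ) then 0 else z i

theorem ncard_support_hardThreshold_le :
    (Function.support (hardThreshold τ e z)).ncard ≤ τ := by
  refine (Set.ncard_le_ncard_of_injOn (fun i => (e.symm i : ℕ)) (t := Set.Iio τ) ?_ ?_).trans_eq
    (Set.ncard_Iio_nat τ)
  · intro i hi
    by_contra h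
    exact hi (if_pos (not_lt.1 h))
  · exact fun i _ j _ hij => e.symm.injective (Fin.ext hij)

theorem sum_sub_sq_hardThreshold :
    ∑ i, (hardThreshold τ e z i - z i) ^ 2 =
      ∑ j ∈ {j : Fin n | τ ≤ (j : ℕ)}, z (e j) ^ 2 := by
  rw [sum_filter, ← Equiv.sum_comp e]
  refine sum_congr rfl fun j _ => ?_
  simp only [hardThreshold, Equiv.symm_apply_apply]
  split_ifs <;> ring

end HardThreshold

theorem sum_sq_le_sum_sub_sq_of_ncard_support_le {n τ : ℕ} {z : Fin n → ℝ}
    {e : Equiv.Perm (Fin n)} (hsort : ∀ i j : Fin n, i ≤ j → |z (e j)| ≤ |z (e i)|)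
    {x : Fin n → ℝ} (hx : (Function.support x).ncard ≤ τ) :
    ∑ j ∈ {j : Fin n | τ ≤ (j : ℕ)}, z (e j) ^ 2 ≤ ∑ i, (x i - z i) ^ 2 := by
  classical
  have hw : Antitone fun j => z (e j) ^ 2 := fun i j hij => sq_le_sq.2 (hsort i j hij)
  have hupper : IsUpperSet (({j : Fin n | τ ≤ (j : ℕ)} : Finset (Fin n)) : Set (Fin n)) :=
    fun i j hij hi => by simpa using (show τ ≤ (i : ℕ) by simpa using hi).trans hij
  have hzeros : #{i | x i = 0} = #{j | x (e j) = 0} := card_equiv e.symm (by simp)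
  have hcard : #{j : Fin n | τ ≤ (j : ℕ)} ≤ #{j | x (e j) = 0} := by
    have := card_filter_eq_zero_add_ncard_support x
    rw [Fin.card_filter_le_val, ← hzeros]
    simp only [Fintype.card_fin] at this
    omega
  calc ∑ j ∈ {j : Fin n | τ ≤ (j : ℕ)}, z (e j) ^ 2
      ≤ ∑ j ∈ {j | x (e j) = 0}, z (e j) ^ 2 :=
        sum_le_sum_of_isUpperSet_of_card_le hw (fun _ => sq_nonneg _) hupper hcard
    _ ≤ ∑ j, (x (e j) - z (e j)) ^ 2 := sum_sq_le_sum_sub_sq (fun j hj => (mem_filter.1 hj).2) _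
    _ = ∑ i, (x i - z i) ^ 2 := Equiv.sum_comp e fun i => (x i - z i) ^ 2

theorem l0_ball_distance_general (n τ : ℕ) (z : Fin n → ℝ) (e : Equiv.Perm (Fin n))
    (hsort : ∀ i j : Fin n, i ≤ j → |z (e j)| ≤ |z (e i)|) :
    IsLeast {s : ℝ | ∃ x : Fin n → ℝ, ({i | x i ≠ 0} : Set (Fin n)).ncard ≤ τ ∧
        s = ∑ i, (x i - z i) ^ 2}
      (∑ i ∈ Finset.univ.filter (fun i : Fin n => τ ≤ (i : ℕ)), (z (e i)) ^ 2) :=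
  ⟨⟨hardThreshold τ e z, ncard_support_hardThreshold_le τ e z,
      (sum_sub_sq_hardThreshold τ e z).symm⟩,
    fun _ ⟨_, hx, hs⟩ => hs ▸ sum_sq_le_sum_sub_sq_of_ncard_support_le hsort hx⟩

/-- The squared Euclidean distance from z to the ℓ0 ball of radius τ equals the sum of
squares of the n − τ smallest-magnitude entries of z. -/
theorem l0_ball_distance (n τ : ℕ) (hτ : τ ≤ n) (z : Fin n → ℝ) (e : Equiv.Perm (Fin n))
    (hsort : ∀ i j : Fin n, i ≤ j → |z (e j)| ≤ |z (e i)|) :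
    IsLeast {s : ℝ | ∃ x : Fin n → ℝ, ({i | x i ≠ 0} : Set (Fin n)).ncard ≤ τ ∧
        s = ∑ i, (x i - z i) ^ 2}
      (∑ i ∈ Finset.univ.filter (fun i : Fin n => τ ≤ (i : ℕ)), (z (e i)) ^ 2) :=
  l0_ball_distance_general n τ z e hsort
end
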